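/- Let X | μ ~ N(μ, σ²) with μ ~ G, marginal density f(x) = ∫ φ_σ(x − μ) dG(μ) and CDF F. Then for any t with F(t) < 1, E[ f'(X)/f(X) | X > t ] = −f(t)/(1 − F(t)). Consequently the oracle Tweedie estimator δ^π(X) = X + σ² f'(X)/f(X) satisfies E[δ^π(X) − μ | X > t] = 0. -/

import Mathlib

open MeasureTheory Real

/-- The `N(0, σ²)` density. -/
noncomputable def gaussianPdf (σ z : ℝ) : ℝ :=
  (Real.sqrt (2 * Real.pi * σ ^ 2))⁻¹ * Real.exp (-(z ^ 2) / (2 * σ ^ 2))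

/-!
The first identity is the fundamental theorem of calculus on `(t, ∞)`, since `f → 0` at `∞`.
For the second, Fubini turns the double integral into
`∫_{x > t} ∫ (δπ(x) - μ) φ_σ(x - μ) dG(μ) dx`, and the inner integral vanishes for every `x` by
Tweedie's formula `∫ (x - μ) φ_σ(x - μ) dG(μ) = -σ² f'(x)`, obtained by differentiating under the
integral sign (`|z| φ_σ(z)` is bounded). The product integrability needed for Fubini comes from
`∫_{x > t} |f'| < ∞` for the score part and from `∫ |z| φ_σ(z) dz < ∞` for the noise part.
-/

open Set Filter Function

lemma gaussianPdf_nonneg (σ z : ℝ) : 0 ≤ gaussianPdf σ z := by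
  unfold gaussianPdf
  positivity

lemma gaussianPdf_pos {σ : ℝ} (hσ : σ ≠ 0) (z : ℝ) : 0 < gaussianPdf σ z := by
  unfold gaussianPdf
  positivity

@[fun_prop]
lemma continuous_gaussianPdf (σ : ℝ) : Continuous (gaussianPdf σ) := by
  unfold gaussianPdf
  fun_prop

lemma gaussianPdf_le (σ z : ℝ) : gaussianPdf σ z ≤ (√(2 * π * σ ^ 2))⁻¹ :=
  mul_le_of_le_one_right (by positivity) <| exp_le_one_iff.2 <|
    div_nonpos_of_nonpos_of_nonneg (neg_nonpos.2 (sq_nonneg z)) (by positivity)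

lemma abs_mul_exp_neg_sq_div_le {σ : ℝ} (hσ : 0 < σ) (z : ℝ) :
    |z| * exp (-(z ^ 2) / (2 * σ ^ 2)) ≤ σ := by
  -- AM-GM: `σ + z² / (2σ) - |z| = (|z| - σ)² / (2σ) + σ / 2`
  have h_am_gm : |z| ≤ σ * (z ^ 2 / (2 * σ ^ 2) + 1) := by
    rw [show σ * (z ^ 2 / (2 * σ ^ 2) + 1) = (z ^ 2 + 2 * σ ^ 2) / (2 * σ) by field_simp,
      le_div_iff₀ (by positivity)]
    nlinarith [sq_nonneg (|z| - σ), sq_abs z]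
  calc |z| * exp (-(z ^ 2) / (2 * σ ^ 2))
      ≤ σ * exp (z ^ 2 / (2 * σ ^ 2)) * exp (-(z ^ 2) / (2 * σ ^ 2)) := by
        gcongr
        exact h_am_gm.trans (mul_le_mul_of_nonneg_left (add_one_le_exp _) hσ.le)
    _ = σ := by rw [mul_assoc, ← exp_add, neg_div, add_neg_cancel, exp_zero, mul_one]

lemma abs_mul_gaussianPdf_le {σ : ℝ} (hσ : 0 < σ) (z : ℝ) :
    |z| * gaussianPdf σ z ≤ (√(2 * π * σ ^ 2))⁻¹ * σ := by
  unfold gaussianPdf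
  rw [mul_left_comm]
  exact mul_le_mul_of_nonneg_left (abs_mul_exp_neg_sq_div_le hσ z) (by positivity)

lemma hasDerivAt_gaussianPdf (σ z : ℝ) :
    HasDerivAt (gaussianPdf σ) (-(σ ^ 2)⁻¹ * (z * gaussianPdf σ z)) z := by
  refine ((((hasDerivAt_pow 2 z).neg.div_const (2 * σ ^ 2)).exp).const_mul
    (√(2 * π * σ ^ 2))⁻¹).congr_deriv ?_
  simp only [gaussianPdf, Pi.neg_apply]
  push_cast
  ring

lemma integrable_mul_gaussianPdf {σ : ℝ} (hσ : σ ≠ 0) :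
    Integrable (fun z => z * gaussianPdf σ z) := by
  refine ((integrable_mul_exp_neg_mul_sq (b := (2 * σ ^ 2)⁻¹) (by positivity)).const_mul
    (√(2 * π * σ ^ 2))⁻¹).congr (ae_of_all _ fun z => ?_)
  dsimp only [gaussianPdf]
  ring_nf

noncomputable def gaussianMixtureDensity (G : Measure ℝ) (σ y : ℝ) : ℝ :=
  ∫ μ, gaussianPdf σ (y - μ) ∂G

noncomputable def tweedieEstimator (G : Measure ℝ) (σ x : ℝ) : ℝ :=
  x + σ ^ 2 * deriv (gaussianMixtureDensity G σ) x / gaussianMixtureDensity G σ x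

lemma gaussianMixtureDensity_nonneg (G : Measure ℝ) (σ y : ℝ) :
    0 ≤ gaussianMixtureDensity G σ y :=
  integral_nonneg fun μ => gaussianPdf_nonneg σ (y - μ)

section GaussianMixture

variable (G : Measure ℝ) [IsFiniteMeasure G] {σ : ℝ}

lemma integrable_gaussianPdf_sub (σ x : ℝ) : Integrable (fun μ => gaussianPdf σ (x - μ)) G :=
  .of_bound (by fun_prop) _ <| ae_of_all _ fun μ => by
    rw [Real.norm_of_nonneg (gaussianPdf_nonneg σ _)]
    exact gaussianPdf_le σ _

lemma integrable_sub_mul_gaussianPdf_sub (hσ : 0 < σ) (x : ℝ) :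
    Integrable (fun μ => (x - μ) * gaussianPdf σ (x - μ)) G :=
  .of_bound (by fun_prop) _ <| ae_of_all _ fun μ => by
    rw [norm_mul, Real.norm_of_nonneg (gaussianPdf_nonneg σ _), Real.norm_eq_abs]
    exact abs_mul_gaussianPdf_le hσ _

lemma gaussianMixtureDensity_pos [NeZero G] (hσ : σ ≠ 0) (y : ℝ) :
    0 < gaussianMixtureDensity G σ y := by
  rw [gaussianMixtureDensity, integral_pos_iff_support_of_nonneg (fun μ => gaussianPdf_nonneg σ _)
    (integrable_gaussianPdf_sub G σ y)]
  have h_support : support (fun μ => gaussianPdf σ (y - μ)) = univ :=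
    eq_univ_of_forall fun μ => (gaussianPdf_pos hσ _).ne'
  rw [h_support]
  exact Measure.measure_univ_pos.2 (NeZero.ne G)

lemma hasDerivAt_gaussianMixtureDensity (hσ : 0 < σ) (x : ℝ) :
    HasDerivAt (gaussianMixtureDensity G σ)
      (-(σ ^ 2)⁻¹ * ∫ μ, (x - μ) * gaussianPdf σ (x - μ) ∂G) x := by
  rw [← integral_const_mul]
  refine (hasDerivAt_integral_of_dominated_loc_of_deriv_le (μ := G)
    (F' := fun y μ => -(σ ^ 2)⁻¹ * ((y - μ) * gaussianPdf σ (y - μ)))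
    (bound := fun _ => (σ ^ 2)⁻¹ * ((√(2 * π * σ ^ 2))⁻¹ * σ)) univ_mem
    (Eventually.of_forall fun y => (integrable_gaussianPdf_sub G σ y).aestronglyMeasurable)
    (integrable_gaussianPdf_sub G σ x) (by fun_prop) (ae_of_all _ fun μ y _ => ?_)
    (integrable_const _) (ae_of_all _ fun μ y _ => ?_)).2
  · rw [norm_mul, norm_neg, norm_inv, norm_mul, Real.norm_of_nonneg (by positivity),
      Real.norm_of_nonneg (gaussianPdf_nonneg σ _), Real.norm_eq_abs]
    exact mul_le_mul_of_nonneg_left (abs_mul_gaussianPdf_le hσ _) (by positivity)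
  · exact (hasDerivAt_gaussianPdf σ (y - μ)).comp_sub_const y μ

lemma differentiable_gaussianMixtureDensity (hσ : 0 < σ) :
    Differentiable ℝ (gaussianMixtureDensity G σ) :=
  fun x => (hasDerivAt_gaussianMixtureDensity G hσ x).differentiableAt

/-- Tweedie's formula. -/
lemma integral_sub_mul_gaussianPdf_sub (hσ : 0 < σ) (x : ℝ) :
    ∫ μ, (x - μ) * gaussianPdf σ (x - μ) ∂G = -σ ^ 2 * deriv (gaussianMixtureDensity G σ) x := by
  rw [(hasDerivAt_gaussianMixtureDensity G hσ x).deriv, ← mul_assoc, neg_mul_neg,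
    mul_inv_cancel₀ (by positivity), one_mul]

lemma integral_tweedieEstimator_sub_mul_gaussianPdf_sub [NeZero G] (hσ : 0 < σ) (x : ℝ) :
    ∫ μ, (tweedieEstimator G σ x - μ) * gaussianPdf σ (x - μ) ∂G = 0 := by
  have hfx : gaussianMixtureDensity G σ x ≠ 0 := (gaussianMixtureDensity_pos G hσ.ne' x).ne'
  simp_rw [tweedieEstimator, add_sub_right_comm, add_mul]
  rw [integral_add (integrable_sub_mul_gaussianPdf_sub G hσ x)
      ((integrable_gaussianPdf_sub G σ x).const_mul _),
    integral_const_mul, integral_sub_mul_gaussianPdf_sub G hσ, ← gaussianMixtureDensity,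
    div_mul_cancel₀ _ hfx]
  ring

lemma integrable_prod_mul_gaussianPdf_sub {ν : Measure ℝ} [SFinite ν] {a : ℝ → ℝ}
    (ha : AEStronglyMeasurable a ν)
    (h : Integrable (fun x => a x * gaussianMixtureDensity G σ x) ν) :
    Integrable (uncurry fun x μ => a x * gaussianPdf σ (x - μ)) (ν.prod G) := by
  have h_meas : AEStronglyMeasurable (uncurry fun x μ => a x * gaussianPdf σ (x - μ))
      (ν.prod G) :=
    ha.comp_fst.mul (by fun_prop)
  refine (integrable_prod_iff h_meas).2 ⟨ae_of_all _ fun x =>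
    (integrable_gaussianPdf_sub G σ x).const_mul (a x), h.norm.congr (ae_of_all _ fun x => ?_)⟩
  simp only [uncurry_apply_pair, norm_mul, Real.norm_of_nonneg (gaussianPdf_nonneg σ _),
    integral_const_mul]
  rw [Real.norm_of_nonneg (gaussianMixtureDensity_nonneg G σ x), gaussianMixtureDensity]

lemma integrable_prod_sub_mul_gaussianPdf_sub (hσ : σ ≠ 0) :
    Integrable (uncurry fun x μ => (x - μ) * gaussianPdf σ (x - μ)) (volume.prod G) := by
  have h := (integrable_const (1 : ℝ) : Integrable _ G).convolution_integrand
    (ContinuousLinearMap.mul ℝ ℝ) (integrable_mul_gaussianPdf hσ)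
  simp only [ContinuousLinearMap.mul_apply', one_mul] at h
  exact h

lemma integrable_prod_tweedieEstimator_sub_mul_gaussianPdf_sub [NeZero G] (hσ : 0 < σ)
    {s : Set ℝ} (hint : IntegrableOn (deriv (gaussianMixtureDensity G σ)) s) :
    Integrable (uncurry fun x μ => (tweedieEstimator G σ x - μ) * gaussianPdf σ (x - μ))
      ((volume.restrict s).prod G) := by
  set f := gaussianMixtureDensity G σ
  have h_score : Integrable (uncurry fun x μ => σ ^ 2 * deriv f x / f x * gaussianPdf σ (x - μ))
      ((volume.restrict s).prod G) := by
    refine integrable_prod_mul_gaussianPdf_sub G ?_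
      ((hint.const_mul (σ ^ 2)).congr (ae_of_all _ fun x => ?_))
    · exact (((measurable_deriv f).const_mul _).div
        (differentiable_gaussianMixtureDensity G hσ).continuous.measurable).aestronglyMeasurable
    · exact (div_mul_cancel₀ _ (gaussianMixtureDensity_pos G hσ.ne' x).ne').symm
  have h_noise : Integrable (uncurry fun x μ => (x - μ) * gaussianPdf σ (x - μ))
      ((volume.restrict s).prod G) := by
    rw [← Measure.restrict_univ (μ := G), Measure.prod_restrict]
    exact (integrable_prod_sub_mul_gaussianPdf_sub G hσ.ne').restrict
  refine (h_score.add h_noise).congr (ae_of_all _ fun p => ?_)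
  simp only [uncurry, tweedieEstimator, Pi.add_apply]
  ring

lemma integral_integral_tweedieEstimator_sub_mul_gaussianPdf_sub [NeZero G] (hσ : 0 < σ)
    {s : Set ℝ} (hint : IntegrableOn (deriv (gaussianMixtureDensity G σ)) s) :
    ∫ μ, (∫ x in s, (tweedieEstimator G σ x - μ) * gaussianPdf σ (x - μ)) ∂G = 0 := by
  rw [← integral_integral_swap
    (integrable_prod_tweedieEstimator_sub_mul_gaussianPdf_sub G hσ hint)]
  simp only [integral_tweedieEstimator_sub_mul_gaussianPdf_sub G hσ, integral_zero]

end GaussianMixture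

theorem tweedie_selection_unbiased_general
    (G : Measure ℝ) [IsProbabilityMeasure G] (σ t : ℝ) (hσ : 0 < σ)
    (f F : ℝ → ℝ)
    (hf : ∀ y, f y = ∫ μ, gaussianPdf σ (y - μ) ∂G)
    (hflim : Filter.Tendsto f Filter.atTop (nhds 0))
    (hfint : Integrable (deriv f) (volume.restrict (Set.Ioi t))) :
    (∫ x in Set.Ioi t, (deriv f x / f x) * f x) / (1 - F t) = -(f t) / (1 - F t)
    ∧ (∫ μ, (∫ x in Set.Ioi t,
        (x + σ ^ 2 * deriv f x / f x - μ) * gaussianPdf σ (x - μ)) ∂G) / (1 - F t)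
      = 0 := by
  obtain rfl : f = gaussianMixtureDensity G σ := funext hf
  refine ⟨?_, div_eq_zero_iff.2 <| .inl <|
    integral_integral_tweedieEstimator_sub_mul_gaussianPdf_sub G hσ hfint⟩
  have h_ftc :
      ∫ x in Ioi t, deriv (gaussianMixtureDensity G σ) x = -gaussianMixtureDensity G σ t := by
    simpa using integral_Ioi_of_hasDerivAt_of_tendsto'
      (fun x _ => (differentiable_gaussianMixtureDensity G hσ x).hasDerivAt) hfint hflim
  rw [← h_ftc]
  congr 1
  exact setIntegral_congr_fun measurableSet_Ioi fun x _ =>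
    div_mul_cancel₀ _ (gaussianMixtureDensity_pos G hσ.ne' x).ne'

/-- **Unbiasedness of the oracle Tweedie estimator under selection.**
`E[f'(X)/f(X) | X > t] = −f(t)/(1 − F t)`, and consequently the oracle estimator
`δπ(x) = x + σ² f'(x)/f(x)` satisfies `E[δπ(X) − μ | X > t] = 0`. -/
theorem tweedie_selection_unbiased
    (G : Measure ℝ) [IsProbabilityMeasure G] (σ t : ℝ) (hσ : 0 < σ)
    (f F : ℝ → ℝ)
    (hf : ∀ y, f y = ∫ μ, gaussianPdf σ (y - μ) ∂G)
    (hF : ∀ s, F s = ∫ x in Set.Iic s, f x)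
    (hFt : F t < 1)
    (hfpos : ∀ y, 0 < f y)
    (hfdiff : Differentiable ℝ f)
    (hflim : Filter.Tendsto f Filter.atTop (nhds 0))
    (hfint : Integrable (deriv f) (volume.restrict (Set.Ioi t)))
    (hint : Integrable (fun μ => ∫ x in Set.Ioi t,
      (x + σ ^ 2 * deriv f x / f x - μ) * gaussianPdf σ (x - μ)) G)
    (hint' : ∀ μ : ℝ, Integrable
      (fun x => (x + σ ^ 2 * deriv f x / f x - μ) * gaussianPdf σ (x - μ))
      (volume.restrict (Set.Ioi t))) :
    (∫ x in Set.Ioi t, (deriv f x / f x) * f x) / (1 - F t) = -(f t) / (1 - F t)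
    ∧ (∫ μ, (∫ x in Set.Ioi t,
        (x + σ ^ 2 * deriv f x / f x - μ) * gaussianPdf σ (x - μ)) ∂G) / (1 - F t)
      = 0 :=
  tweedie_selection_unbiased_general G σ t hσ f F hf hflim hfint
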